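/- Let B and X be 2-nilpotent groups and let φ : B →* MulAut X be a group homomorphism, with b ∗ x := φ(b)(x), such that every φ(b) is a central automorphism of X, i.e., (b ∗ x)·x⁻¹ ∈ Z(X) for all b ∈ B and x ∈ X. Then the semidirect product X ⋊[φ] B is 2-nilpotent if and only if b' ∗ ((b ∗ x)·x⁻¹) = (b ∗ x)·x⁻¹ for all b, b' ∈ B and all x ∈ X. -/

import Mathlib

/-!
Write `b ∗ x = δ_b(x) · x` with `δ_b(x) := (b ∗ x) x⁻¹` central. The commutator of `(1, b)` and
`(x, 1)` is `(δ_b(x), 1)`, and an element `(n, 1)` can only be central if `B` fixes `n`; this gives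
necessity. Conversely, if `B` fixes every `δ_b(x)`, the automorphisms `φ b` commute pairwise and fix
the commutators of `X`, so `⁅(x, b), (y, c)⁆ = (δ_b(y) δ_c(x)⁻¹ ⁅x, y⁆, ⁅b, c⁆)`. Its first
component is central in `X` and fixed by `B`, its second is central in `B` and acts trivially, and
such an element is central in `X ⋊[φ] B`.
-/

open scoped commutatorElement

open Subgroup

section CentralElements

variable {G : Type*} [Group G] {z : G}

theorem commutatorElement_mul_left_of_mem_center (hz : z ∈ center G) (x y : G) :
    ⁅z * x, y⁆ = ⁅x, y⁆ := by
  calc ⁅z * x, y⁆ = z * (x * y * x⁻¹) * z⁻¹ * y⁻¹ := by group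
    _ = ⁅x, y⁆ := by rw [← mem_center_iff.mp hz, commutatorElement_def]; group

theorem commutatorElement_mul_right_of_mem_center (hz : z ∈ center G) (x y : G) :
    ⁅x, z * y⁆ = ⁅x, y⁆ := by
  rw [← commutatorElement_inv, commutatorElement_mul_left_of_mem_center hz, commutatorElement_inv]

theorem mul_mul_mul_inv_mul_inv_of_mem_center {a b : G} (ha : a ∈ center G) (hb : b ∈ center G)
    (x y : G) : x * (a * y) * (b * x)⁻¹ * y⁻¹ = a * b⁻¹ * ⁅x, y⁆ := by
  calc x * (a * y) * (b * x)⁻¹ * y⁻¹ = x * a * (y * x⁻¹ * b⁻¹ * y⁻¹) := by group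
    _ = a * (x * y * x⁻¹ * b⁻¹) * y⁻¹ := by rw [mem_center_iff.mp ha x]; group
    _ = a * b⁻¹ * ⁅x, y⁆ := by
      rw [mem_center_iff.mp (inv_mem hb) (x * y * x⁻¹), commutatorElement_def]; group

end CentralElements

namespace MulAut

variable {X : Type*} [Group X]

theorem map_commutatorElement_of_central {f : MulAut X} (hf : ∀ x, f x * x⁻¹ ∈ center X)
    (u v : X) : f ⁅u, v⁆ = ⁅u, v⁆ := by
  calc f ⁅u, v⁆ = ⁅f u * u⁻¹ * u, f v * v⁻¹ * v⁆ := by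
        simp only [map_commutatorElement, inv_mul_cancel_right]
    _ = ⁅u, v⁆ := by
      rw [commutatorElement_mul_left_of_mem_center (hf u),
        commutatorElement_mul_right_of_mem_center (hf v)]

theorem apply_apply_eq_of_fixes_displacement {f g : MulAut X}
    (hfg : ∀ x, f (g x * x⁻¹) = g x * x⁻¹) (x : X) :
    f (g x) = g x * x⁻¹ * (f x * x⁻¹) * x := by
  conv_lhs => rw [← inv_mul_cancel_right (g x) x]
  rw [map_mul, hfg, mul_assoc _ _ x, inv_mul_cancel_right]

theorem commute_of_central {f g : MulAut X} (hf : ∀ x, f x * x⁻¹ ∈ center X)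
    (hfg : ∀ x, f (g x * x⁻¹) = g x * x⁻¹) (hgf : ∀ x, g (f x * x⁻¹) = f x * x⁻¹) :
    Commute f g := by
  ext x
  simp only [mul_apply, apply_apply_eq_of_fixes_displacement hfg,
    apply_apply_eq_of_fixes_displacement hgf, mem_center_iff.mp (hf x)]

end MulAut

namespace SemidirectProduct

variable {N G : Type*} [Group N] [Group G] {φ : G →* MulAut N}

theorem commutatorElement_inr_inl (g : G) (n : N) :
    ⁅(inr g : N ⋊[φ] G), (inl n : N ⋊[φ] G)⁆ = inl (φ g n * n⁻¹) := by
  rw [commutatorElement_def, ← map_inv (inr : G →* N ⋊[φ] G), ← inl_aut, map_mul, map_inv]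

theorem apply_eq_self_of_inl_mem_center {n : N} (hn : inl n ∈ center (N ⋊[φ] G)) (g : G) :
    φ g n = n := by
  apply inl_injective (φ := φ)
  rw [inl_aut, mem_center_iff.mp hn (inr g), mul_assoc, ← map_mul, mul_inv_cancel, map_one, mul_one]

theorem right_commutatorElement (g k : N ⋊[φ] G) : ⁅g, k⁆.right = ⁅g.right, k.right⁆ :=
  map_commutatorElement rightHom g k

theorem left_commutatorElement_of_commute (hφ : ∀ a b, Commute (φ a) (φ b)) (g k : N ⋊[φ] G) :
    ⁅g, k⁆.left = g.left * φ g.right k.left * (φ k.right g.left)⁻¹ * k.left⁻¹ := by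
  have hconj : φ (g.right * k.right * g.right⁻¹) = φ k.right := by
    rw [map_mul, map_mul, map_inv, (hφ _ _).mul_inv_cancel]
  simp only [commutatorElement_def, mul_left, mul_right, inv_left, inv_right]
  rw [← MulAut.mul_apply, ← map_mul, hconj, ← MulAut.mul_apply, ← map_mul, mul_inv_cancel, map_one,
    MulAut.one_apply, map_inv]

theorem mem_center_of_left_right {x : N ⋊[φ] G} (hl : x.left ∈ center N)
    (hfix : ∀ g, φ g x.left = x.left) (hr : x.right ∈ center G) (hφ : φ x.right = 1) :
    x ∈ center (N ⋊[φ] G) := by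
  rw [mem_center_iff]
  intro y
  ext
  · simp [mul_left, hφ, hfix, mem_center_iff.mp hl]
  · simp [mul_right, mem_center_iff.mp hr]

theorem commutatorElement_mem_center_of_central (hG : commutator G ≤ center G)
    (hN : commutator N ≤ center N) (hc : ∀ g n, φ g n * n⁻¹ ∈ center N)
    (hfix : ∀ g g' n, φ g' (φ g n * n⁻¹) = φ g n * n⁻¹) (x y : N ⋊[φ] G) :
    ⁅x, y⁆ ∈ center (N ⋊[φ] G) := by
  have hφ : ∀ a b, Commute (φ a) (φ b) := fun a b =>
    MulAut.commute_of_central (hc a) (hfix b a) (hfix a b)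
  have hleft : ⁅x, y⁆.left
      = (φ x.right y.left * y.left⁻¹) * (φ y.right x.left * x.left⁻¹)⁻¹ * ⁅x.left, y.left⁆ := by
    rw [left_commutatorElement_of_commute hφ, ← mul_mul_mul_inv_mul_inv_of_mem_center (hc _ _)
      (hc _ _), inv_mul_cancel_right, inv_mul_cancel_right]
  refine mem_center_of_left_right ?_ (fun g => ?_) ?_ ?_
  · rw [hleft]
    exact mul_mem (mul_mem (hc _ _) (inv_mem (hc _ _)))
      (hN (commutator_mem_commutator (mem_top _) (mem_top _)))
  · rw [hleft, map_mul, map_mul, map_inv, hfix, hfix, MulAut.map_commutatorElement_of_central (hc g)]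
  · rw [right_commutatorElement]
    exact hG (commutator_mem_commutator (mem_top _) (mem_top _))
  · rw [right_commutatorElement, map_commutatorElement, commutatorElement_eq_one_iff_commute]
    exact hφ _ _

end SemidirectProduct

/-- Let `B`, `X` be `2`-nilpotent groups and `φ : B →* MulAut X` act by
central automorphisms, i.e. `(b ∗ x) * x⁻¹ ∈ Z(X)` for all `b x` (with
`b ∗ x := φ b x`). Then the semidirect product `X ⋊[φ] B` is `2`-nilpotent
if and only if `b' ∗ ((b ∗ x) * x⁻¹) = (b ∗ x) * x⁻¹` for all `b b' x`. -/
theorem semidirect_nil2_iff_fixed (B X : Type*) [Group B] [Group X]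
    (hB : commutator B ≤ Subgroup.center B)
    (hX : commutator X ≤ Subgroup.center X)
    (φ : B →* MulAut X)
    (hc : ∀ (b : B) (x : X), φ b x * x⁻¹ ∈ Subgroup.center X) :
    commutator (X ⋊[φ] B) ≤ Subgroup.center (X ⋊[φ] B) ↔
      ∀ (b b' : B) (x : X), φ b' (φ b x * x⁻¹) = φ b x * x⁻¹ := by
  rw [commutator_def, commutator_le]
  constructor
  · intro h b b' x
    refine SemidirectProduct.apply_eq_self_of_inl_mem_center ?_ b'
    rw [← SemidirectProduct.commutatorElement_inr_inl]
    exact h _ (mem_top _) _ (mem_top _)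
  · exact fun hfix g _ k _ =>
      SemidirectProduct.commutatorElement_mem_center_of_central hB hX hc hfix g k
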